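/- Let k be a field, 𝔤 a Lie algebra over k, 𝔥 an abelian Lie subalgebra of 𝔤, and α : 𝔥 → k a linear functional. Let e, f ∈ 𝔤 satisfy [h, e] = α(h)·e and [h, f] = −α(h)·f for all h ∈ 𝔥. Let M be a 𝔤-module that is the direct sum of its 𝔥-weight spaces, each of which is finite-dimensional over k. If e and f both act injectively on M, then e and f act bijectively on M. -/

import Mathlib

/-!
A root vector `x` of weight `β` maps the weight space `M^μ` into `M^(μ+β)`, and one of weight `-β`
maps it back. If both act injectively, the finite dimensions of `M^μ` and `M^(μ+β)` bound each
other, so they agree, and the injective map `x : M^μ → M^(μ+β)` is onto. Hence the image of `x`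
contains every weight space, which span `M`.
-/

variable (k : Type*) [Field k] (g : Type*) [LieRing g] [LieAlgebra k g]
  (H : LieSubalgebra k g)
  (M : Type*) [AddCommGroup M] [Module k M] [LieRingModule g M] [LieModule k g M]

/-- The `μ`-weight space of `M` with respect to the subalgebra `H`. -/
def wtSpace (μ : ↥H →ₗ[k] k) : Submodule k M where
  carrier := {v | ∀ h : H, ⁅(h : g), v⁆ = μ h • v}
  add_mem' := by
    intro a b ha hb h
    rw [lie_add, ha h, hb h, smul_add]
  zero_mem' := by
    intro h
    rw [lie_zero, smul_zero]
  smul_mem' := by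
    intro c v hv h
    rw [lie_smul, hv h, smul_comm]

section

open Function Module

variable {k g H M} {β : ↥H →ₗ[k] k} {x y : g}

lemma lie_mem_wtSpace_add (hx : ∀ h : H, ⁅(h : g), x⁆ = β h • x) {μ : ↥H →ₗ[k] k} {v : M}
    (hv : v ∈ wtSpace k g H M μ) : ⁅x, v⁆ ∈ wtSpace k g H M (μ + β) := by
  intro h
  rw [leibniz_lie, hx h, hv h, smul_lie, lie_smul, LinearMap.add_apply, add_smul, add_comm]

def wtSpaceShift (hx : ∀ h : H, ⁅(h : g), x⁆ = β h • x) (μ : ↥H →ₗ[k] k) :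
    wtSpace k g H M μ →ₗ[k] wtSpace k g H M (μ + β) :=
  (LieModule.toEnd k g M x).restrict fun _ ↦ lie_mem_wtSpace_add hx

lemma wtSpaceShift_injective (hx : ∀ h : H, ⁅(h : g), x⁆ = β h • x)
    (hxi : Injective fun m : M ↦ ⁅x, m⁆) (μ : ↥H →ₗ[k] k) :
    Injective (wtSpaceShift (M := M) hx μ) :=
  fun _ _ hab ↦ Subtype.ext (hxi (congrArg Subtype.val hab))

variable [∀ μ, FiniteDimensional k (wtSpace k g H M μ)]

lemma finrank_wtSpace_add_eq (hx : ∀ h : H, ⁅(h : g), x⁆ = β h • x)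
    (hy : ∀ h : H, ⁅(h : g), y⁆ = -(β h) • y)
    (hxi : Injective fun m : M ↦ ⁅x, m⁆) (hyi : Injective fun m : M ↦ ⁅y, m⁆)
    (μ : ↥H →ₗ[k] k) :
    finrank k (wtSpace k g H M μ) = finrank k (wtSpace k g H M (μ + β)) := by
  have hy' : ∀ h : H, ⁅(h : g), y⁆ = (-β) h • y := hy
  refine le_antisymm (LinearMap.finrank_le_finrank_of_injective
    (wtSpaceShift_injective hx hxi μ)) ?_
  have hle := LinearMap.finrank_le_finrank_of_injective (wtSpaceShift_injective hy' hyi (μ + β))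
  rwa [add_neg_cancel_right] at hle

lemma wtSpaceShift_surjective (hx : ∀ h : H, ⁅(h : g), x⁆ = β h • x)
    (hy : ∀ h : H, ⁅(h : g), y⁆ = -(β h) • y)
    (hxi : Injective fun m : M ↦ ⁅x, m⁆) (hyi : Injective fun m : M ↦ ⁅y, m⁆)
    (μ : ↥H →ₗ[k] k) :
    Surjective (wtSpaceShift (M := M) hx μ) :=
  (LinearMap.injective_iff_surjective_of_finrank_eq_finrank
    (finrank_wtSpace_add_eq hx hy hxi hyi μ)).mp (wtSpaceShift_injective hx hxi μ)

lemma wtSpace_le_range_toEnd (hx : ∀ h : H, ⁅(h : g), x⁆ = β h • x)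
    (hy : ∀ h : H, ⁅(h : g), y⁆ = -(β h) • y)
    (hxi : Injective fun m : M ↦ ⁅x, m⁆) (hyi : Injective fun m : M ↦ ⁅y, m⁆)
    (ν : ↥H →ₗ[k] k) :
    wtSpace k g H M ν ≤ LinearMap.range (LieModule.toEnd k g M x) := by
  intro v hv
  obtain ⟨w, hw⟩ := wtSpaceShift_surjective hx hy hxi hyi (ν - β)
    ⟨v, by rwa [sub_add_cancel]⟩
  exact ⟨w, congrArg Subtype.val hw⟩

lemma surjective_lie_of_isInternal [DecidableEq (↥H →ₗ[k] k)]
    (hM : DirectSum.IsInternal fun μ : ↥H →ₗ[k] k ↦ wtSpace k g H M μ)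
    (hx : ∀ h : H, ⁅(h : g), x⁆ = β h • x)
    (hy : ∀ h : H, ⁅(h : g), y⁆ = -(β h) • y)
    (hxi : Injective fun m : M ↦ ⁅x, m⁆) (hyi : Injective fun m : M ↦ ⁅y, m⁆) :
    Surjective fun m : M ↦ ⁅x, m⁆ := by
  have hrange : LinearMap.range (LieModule.toEnd k g M x) = ⊤ := by
    rw [← top_le_iff, ← hM.submodule_iSup_eq_top]
    exact iSup_le (wtSpace_le_range_toEnd hx hy hxi hyi)
  exact LinearMap.range_eq_top.mp hrange

end

theorem stmt_13 [DecidableEq (↥H →ₗ[k] k)]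
    (α : ↥H →ₗ[k] k) (e f : g)
    (he : ∀ h : H, ⁅(h : g), e⁆ = α h • e)
    (hf : ∀ h : H, ⁅(h : g), f⁆ = -(α h) • f)
    (hM : DirectSum.IsInternal fun μ : ↥H →ₗ[k] k => wtSpace k g H M μ)
    (hfd : ∀ μ : ↥H →ₗ[k] k, FiniteDimensional k (wtSpace k g H M μ))
    (hei : Function.Injective fun m : M => ⁅e, m⁆)
    (hfi : Function.Injective fun m : M => ⁅f, m⁆) :
    Function.Bijective (fun m : M => ⁅e, m⁆) ∧
    Function.Bijective (fun m : M => ⁅f, m⁆) := by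
  have hf' : ∀ h : H, ⁅(h : g), f⁆ = (-α) h • f := hf
  have he' : ∀ h : H, ⁅(h : g), e⁆ = -((-α) h) • e := by
    simpa only [LinearMap.neg_apply, neg_neg] using he
  exact ⟨⟨hei, surjective_lie_of_isInternal hM he hf hei hfi⟩,
    ⟨hfi, surjective_lie_of_isInternal hM hf' he' hfi hei⟩⟩
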